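/- Let G be a nilpotent group of class at most n (n > 1). Then for all integers a₁,…,a_n and all g₁,…,g_n ∈ G, [g₁^{a₁}, g₂^{a₂}, …, g_n^{a_n}] = [g₁,…,g_n]^{a₁a₂⋯a_n}. -/

import Mathlib

/-- The commutator `[a,b] = a⁻¹b⁻¹ab`. -/
def gcomm {G : Type*} [Group G] (a b : G) : G := a⁻¹ * b⁻¹ * a * b

/-- Conjugation `g^h = h⁻¹gh`. -/
def gconj {G : Type*} [Group G] (g h : G) : G := h⁻¹ * g * h

/-- Left-normed commutator `[x, l₁, l₂, …]`. -/
def commList {G : Type*} [Group G] (x : G) (l : List G) : G := l.foldl gcomm x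

/-- Left-normed commutator of a list: `[g₁, …, g_k]` (equal to `1` for the empty list). -/
def listComm {G : Type*} [Group G] : List G → G
  | [] => 1
  | x :: xs => commList x xs

/-!
Write `γ j` for the lower central series. Modulo `γ (j + 2)` the commutator map
`γ j × G → γ (j + 1)` is bimultiplicative, since `γ (j + 1) / γ (j + 2)` is central in
`G / γ (j + 2)`; moreover `[x, w]` modulo `γ (j + 2)` only depends on `x` modulo `γ (j + 1)`.
So if `x ≡ u ^ b` modulo `γ (j + 1)` with `u ∈ γ j`, then `[x, w ^ c] ≡ [u, w] ^ (b * c)`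
modulo `γ (j + 2)`. Iterating along the left-normed commutator gives the identity modulo `γ n = 1`.
-/

open Subgroup
open scoped commutatorElement

section Identities

variable {G : Type*} [Group G]

lemma commList_cons (x y : G) (l : List G) : commList x (y :: l) = commList (gcomm x y) l := rfl

lemma QuotientGroup.mk_gcomm (N : Subgroup G) [N.Normal] (x y : G) :
    ((gcomm x y : G) : G ⧸ N) = gcomm (x : G ⧸ N) y := by
  simp [gcomm]

lemma gcomm_mul_left_of_mem_center {z : G} (hz : z ∈ center G) (x w : G) :
    gcomm (x * z) w = gcomm x w := by
  have hconj : z⁻¹ * (x⁻¹ * w⁻¹ * x) * z = x⁻¹ * w⁻¹ * x := by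
    rw [mul_assoc, mem_center_iff.mp hz, inv_mul_cancel_left]
  calc gcomm (x * z) w = z⁻¹ * (x⁻¹ * w⁻¹ * x) * z * w := by simp only [gcomm]; group
    _ = gcomm x w := by rw [hconj]; rfl

lemma gcomm_zpow_left_of_commute {x w : G} (h : Commute (gcomm x w) x) (b : ℤ) :
    gcomm (x ^ b) w = gcomm x w ^ b := by
  have hconj : w⁻¹ * x * w⁻¹⁻¹ = x * gcomm x w := by simp [gcomm, mul_assoc]
  calc gcomm (x ^ b) w = (x ^ b)⁻¹ * (w⁻¹ * x * w⁻¹⁻¹) ^ b := by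
        rw [conj_zpow]; simp [gcomm, mul_assoc]
    _ = gcomm x w ^ b := by rw [hconj, h.symm.mul_zpow, inv_mul_cancel_left]

lemma gcomm_zpow_right_of_commute {x w : G} (h : Commute (gcomm x w) w) (c : ℤ) :
    gcomm x (w ^ c) = gcomm x w ^ c := by
  have hconj : x⁻¹ * w⁻¹ * x⁻¹⁻¹ = gcomm x w * w⁻¹ := by simp [gcomm, mul_assoc]
  calc gcomm x (w ^ c) = (x⁻¹ * w⁻¹ * x⁻¹⁻¹) ^ c * w ^ c := by
        rw [conj_zpow]; simp [gcomm, mul_assoc]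
    _ = gcomm x w ^ c := by
        rw [hconj, h.inv_right.mul_zpow, inv_zpow, inv_mul_cancel_right]

lemma gcomm_zpow_zpow_of_mem_center {x w : G} (h : gcomm x w ∈ center G) (b c : ℤ) :
    gcomm (x ^ b) (w ^ c) = gcomm x w ^ (b * c) := by
  have hb := gcomm_zpow_left_of_commute (mem_center_iff.mp h x).symm b
  rw [gcomm_zpow_right_of_commute (hb ▸ (mem_center_iff.mp (zpow_mem h b) w).symm), hb, zpow_mul]

end Identities

section LowerCentralSeries

variable {G : Type*} [Group G]

local notation "γ" => Subgroup.lowerCentralSeries (⊤ : Subgroup G)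

lemma gcomm_mem_lowerCentralSeries_succ {j : ℕ} {x : G} (hx : x ∈ γ j) (y : G) :
    gcomm x y ∈ γ (j + 1) := by
  have hx' : gcomm x y = ⁅x⁻¹, y⁻¹⁆ := by simp [gcomm, commutatorElement_def]
  exact hx' ▸ commutator_mem_commutator (inv_mem hx) (mem_top _)

lemma mk_mem_center_of_mem_lowerCentralSeries {j : ℕ} {x : G} (hx : x ∈ γ j) :
    (x : G ⧸ γ (j + 1)) ∈ center (G ⧸ γ (j + 1)) := by
  refine mem_center_iff.mpr (QuotientGroup.mk_surjective.forall.mpr fun y => ?_)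
  have hxy : (y * x)⁻¹ * (x * y) ∈ γ (j + 1) := by
    simpa [gcomm, mul_assoc] using gcomm_mem_lowerCentralSeries_succ hx y
  exact QuotientGroup.eq.mpr hxy

lemma mk_gcomm_zpow_mul_zpow {j : ℕ} {u z : G} (hu : u ∈ γ j) (hz : z ∈ γ (j + 1))
    (w : G) (b c : ℤ) :
    ((gcomm (u ^ b * z) (w ^ c) : G) : G ⧸ γ (j + 2))
      = ((gcomm u w : G) : G ⧸ γ (j + 2)) ^ (b * c) := by
  have hcomm := mk_mem_center_of_mem_lowerCentralSeries (gcomm_mem_lowerCentralSeries_succ hu w)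
  rw [QuotientGroup.mk_gcomm] at hcomm ⊢
  rw [QuotientGroup.mk_gcomm, QuotientGroup.mk_mul, QuotientGroup.mk_zpow, QuotientGroup.mk_zpow,
    gcomm_mul_left_of_mem_center (mk_mem_center_of_mem_lowerCentralSeries hz),
    gcomm_zpow_zpow_of_mem_center hcomm]

lemma mk_commList_ofFn_zpow (m : ℕ) (w : Fin m → G) (c : Fin m → ℤ) {j : ℕ} {u x : G}
    (hu : u ∈ γ j) (b : ℤ) (hx : (x : G ⧸ γ (j + 1)) = u ^ b) :
    ((commList x (List.ofFn fun i => w i ^ c i) : G) : G ⧸ γ (j + m + 1))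
      = ((commList u (List.ofFn w) : G) : G ⧸ γ (j + m + 1)) ^ (b * ∏ i, c i) := by
  induction m generalizing j u x b with
  | zero => simpa [commList] using hx
  | succ m ih =>
    obtain ⟨z, hz, rfl⟩ : ∃ z ∈ γ (j + 1), x = u ^ b * z :=
      ⟨(u ^ b)⁻¹ * x, QuotientGroup.eq.mp (by rw [QuotientGroup.mk_zpow, hx]), by group⟩
    have htail := ih (fun i => w i.succ) (fun i => c i.succ)
      (gcomm_mem_lowerCentralSeries_succ hu (w 0)) (b * c 0)
      (mk_gcomm_zpow_mul_zpow hu hz (w 0) b (c 0))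
    rw [show j + 1 + m + 1 = j + (m + 1) + 1 by omega] at htail
    rw [List.ofFn_succ, List.ofFn_succ, commList_cons, commList_cons, htail, Fin.prod_univ_succ,
      mul_assoc]

end LowerCentralSeries

theorem stmt10_general {G : Type*} [Group G] (n : ℕ)
    (h : (⊤ : Subgroup G).lowerCentralSeries n = ⊥)
    (g : Fin n → G) (a : Fin n → ℤ) :
    listComm (List.ofFn (fun i => g i ^ a i))
      = (listComm (List.ofFn g)) ^ (∏ i, a i) := by
  rcases n with _ | m
  · simp [listComm]
  have hmk := mk_commList_ofFn_zpow m (fun i => g i.succ) (fun i => a i.succ)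
    (j := 0) (mem_top (g 0)) (a 0) (QuotientGroup.mk_zpow _ (g 0) (a 0))
  rw [← QuotientGroup.mk_zpow, QuotientGroup.eq, zero_add, h, mem_bot, inv_mul_eq_one] at hmk
  rw [List.ofFn_succ, List.ofFn_succ, Fin.prod_univ_succ]
  exact hmk

theorem stmt10 {G : Type*} [Group G] (n : ℕ) (hn : 1 < n)
    (h : (⊤ : Subgroup G).lowerCentralSeries n = ⊥)
    (g : Fin n → G) (a : Fin n → ℤ) :
    listComm (List.ofFn (fun i => g i ^ a i))
      = (listComm (List.ofFn g)) ^ (∏ i, a i) :=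
  stmt10_general n h g a
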